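/- arXiv:0911.2995 — 5 statements merged into one kernel-verified Lean document; each statement's English description precedes it below -/
import Mathlib

section
/- For finite-dimensional Lie algebras a and b, the invariant α is additive: α(a ⊕ b) = α(a) + α(b), where α denotes the maximal dimension of an abelian subalgebra. -/
open Module

noncomputable def alphaInv (K L : Type*) [Field K] [LieRing L] [LieAlgebra K L] : ℕ :=
  sSup {n | ∃ a : LieSubalgebra K L, IsLieAbelian a ∧ finrank K a = n}

noncomputable def betaInv (K L : Type*) [Field K] [LieRing L] [LieAlgebra K L] : ℕ :=
  sSup {n | ∃ I : LieIdeal K L, IsLieAbelian I ∧ finrank K I = n}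

instance prodLieRing (L M : Type*) [LieRing L] [LieRing M] : LieRing (L × M) where
  bracket p q := (⁅p.1, q.1⁆, ⁅p.2, q.2⁆)
  add_lie x y z := Prod.ext (add_lie x.1 y.1 z.1) (add_lie x.2 y.2 z.2)
  lie_add x y z := Prod.ext (lie_add x.1 y.1 z.1) (lie_add x.2 y.2 z.2)
  lie_self x := Prod.ext (lie_self x.1) (lie_self x.2)
  leibniz_lie x y z := Prod.ext (leibniz_lie x.1 y.1 z.1) (leibniz_lie x.2 y.2 z.2)

instance prodLieAlgebra (K L M : Type*) [CommRing K] [LieRing L] [LieRing M]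
    [LieAlgebra K L] [LieAlgebra K M] : LieAlgebra K (L × M) where
  lie_smul t x y := Prod.ext (lie_smul t x.1 y.1) (lie_smul t x.2 y.2)

/-!
A product `a × b` of abelian subalgebras of `A` and `B` is an abelian subalgebra of `A × B` of
dimension `dim a + dim b`, so `α(A) + α(B) ≤ α(A × B)`. Conversely, an abelian subalgebra `h` of
`A × B` lies in the product of its two projections, which are abelian as images of `h` under Lie
algebra morphisms, so `dim h ≤ dim pr₁ h + dim pr₂ h ≤ α(A) + α(B)`.
-/

namespace LieSubalgebra

section CommRing

variable {K L M : Type*} [CommRing K] [LieRing L] [LieAlgebra K L] [LieRing M] [LieAlgebra K M]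

theorem isLieAbelian_iff_forall_lie_eq_zero {h : LieSubalgebra K L} :
    IsLieAbelian h ↔ ∀ x ∈ h, ∀ y ∈ h, ⁅x, y⁆ = 0 :=
  ⟨fun hh x hx y hy => congrArg Subtype.val (hh.trivial ⟨x, hx⟩ ⟨y, hy⟩),
    fun hh => ⟨fun x y => Subtype.ext (hh x x.2 y y.2)⟩⟩

instance isLieAbelian_bot : IsLieAbelian (⊥ : LieSubalgebra K L) :=
  isLieAbelian_iff_forall_lie_eq_zero.2 fun x hx _ _ => by
    rw [(mem_bot x).1 hx, zero_lie]

theorem isLieAbelian_map (f : L →ₗ⁅K⁆ M) {h : LieSubalgebra K L} (hh : IsLieAbelian h) :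
    IsLieAbelian (h.map f) := by
  refine isLieAbelian_iff_forall_lie_eq_zero.2 ?_
  rintro _ ⟨x, hx, rfl⟩ _ ⟨y, hy, rfl⟩
  change ⁅f x, f y⁆ = 0
  rw [← f.map_lie, isLieAbelian_iff_forall_lie_eq_zero.1 hh x hx y hy, map_zero]

def prod (a : LieSubalgebra K L) (b : LieSubalgebra K M) : LieSubalgebra K (L × M) :=
  { (a : Submodule K L).prod (b : Submodule K M) with
    lie_mem' := fun hx hy => ⟨a.lie_mem hx.1 hy.1, b.lie_mem hx.2 hy.2⟩ }

theorem isLieAbelian_prod {a : LieSubalgebra K L} {b : LieSubalgebra K M}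
    (ha : IsLieAbelian a) (hb : IsLieAbelian b) : IsLieAbelian (a.prod b) :=
  isLieAbelian_iff_forall_lie_eq_zero.2 fun _ hx _ hy => Prod.ext
    (isLieAbelian_iff_forall_lie_eq_zero.1 ha _ hx.1 _ hy.1)
    (isLieAbelian_iff_forall_lie_eq_zero.1 hb _ hx.2 _ hy.2)

theorem le_prod_map_fst_map_snd (h : LieSubalgebra K (L × M)) :
    h ≤ (h.map (LieHom.fst K L M)).prod (h.map (LieHom.snd K L M)) :=
  fun x hx => ⟨⟨x, hx, rfl⟩, ⟨x, hx, rfl⟩⟩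

end CommRing

theorem finrank_prod {K L M : Type*} [Field K] [LieRing L] [LieAlgebra K L] [LieRing M]
    [LieAlgebra K M] [FiniteDimensional K L] [FiniteDimensional K M]
    (a : LieSubalgebra K L) (b : LieSubalgebra K M) :
    finrank K (a.prod b) = finrank K a + finrank K b :=
  let e : a.prod b ≃ₗ[K] a × b :=
    { toFun x := (⟨x.1.1, x.2.1⟩, ⟨x.1.2, x.2.2⟩)
      invFun x := ⟨(x.1.1, x.2.1), x.1.2, x.2.2⟩
      map_add' _ _ := rfl
      map_smul' _ _ := rfl }
  e.finrank_eq.trans Module.finrank_prod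

end LieSubalgebra

section alphaInv

open LieSubalgebra

variable {K L : Type*} [Field K] [LieRing L] [LieAlgebra K L] [FiniteDimensional K L]

variable (K L) in
theorem bddAbove_finrank_isLieAbelian :
    BddAbove {n | ∃ a : LieSubalgebra K L, IsLieAbelian a ∧ finrank K a = n} :=
  ⟨finrank K L, by rintro _ ⟨a, -, rfl⟩; exact Submodule.finrank_le a.toSubmodule⟩

variable (K L) in
theorem exists_isLieAbelian_finrank_eq_alphaInv :
    ∃ a : LieSubalgebra K L, IsLieAbelian a ∧ finrank K a = alphaInv K L :=
  Nat.sSup_mem (by exact ⟨_, ⊥, isLieAbelian_bot, rfl⟩) (bddAbove_finrank_isLieAbelian K L)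

theorem finrank_le_alphaInv {a : LieSubalgebra K L} (ha : IsLieAbelian a) :
    finrank K a ≤ alphaInv K L :=
  le_csSup (bddAbove_finrank_isLieAbelian K L) ⟨a, ha, rfl⟩

end alphaInv

/-- α is additive on direct sums. -/
theorem stmt_2 (K A B : Type*) [Field K] [LieRing A] [LieAlgebra K A] [LieRing B]
    [LieAlgebra K B] [FiniteDimensional K A] [FiniteDimensional K B] :
    alphaInv K (A × B) = alphaInv K A + alphaInv K B := by
  refine le_antisymm ?_ ?_
  · obtain ⟨h, hh, hfin⟩ := exists_isLieAbelian_finrank_eq_alphaInv K (A × B)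
    calc alphaInv K (A × B) = finrank K h := hfin.symm
      _ ≤ finrank K ((h.map (LieHom.fst K A B)).prod (h.map (LieHom.snd K A B))) :=
        Submodule.finrank_mono h.le_prod_map_fst_map_snd
      _ = finrank K (h.map (LieHom.fst K A B)) + finrank K (h.map (LieHom.snd K A B)) :=
        LieSubalgebra.finrank_prod _ _
      _ ≤ alphaInv K A + alphaInv K B :=
        add_le_add (finrank_le_alphaInv (LieSubalgebra.isLieAbelian_map _ hh))
          (finrank_le_alphaInv (LieSubalgebra.isLieAbelian_map _ hh))
  · obtain ⟨a, ha, hfa⟩ := exists_isLieAbelian_finrank_eq_alphaInv K A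
    obtain ⟨b, hb, hfb⟩ := exists_isLieAbelian_finrank_eq_alphaInv K B
    rw [← hfa, ← hfb, ← LieSubalgebra.finrank_prod]
    exact finrank_le_alphaInv (LieSubalgebra.isLieAbelian_prod ha hb)
end

section
/- Let g be the 4-dimensional real Lie algebra with basis x1,x2,x3,x4 and brackets [x1,x2] = x2 − x3, [x1,x3] = x2 + x3, [x1,x4] = 2x4, [x2,x3] = x4. Then α(g) = 2 but β(g) = 1. -/
open Module

section

variable {K L : Type*} [Field K] [LieRing L] [LieAlgebra K L]

theorem alphaInv_eq {n : ℕ} (h : ∃ A : LieSubalgebra K L, IsLieAbelian A ∧ finrank K A = n)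
    (hle : ∀ A : LieSubalgebra K L, IsLieAbelian A → finrank K A ≤ n) : alphaInv K L = n :=
  IsGreatest.csSup_eq ⟨h, by rintro _ ⟨A, hA, rfl⟩; exact hle A hA⟩

theorem betaInv_eq {n : ℕ} (h : ∃ I : LieIdeal K L, IsLieAbelian I ∧ finrank K I = n)
    (hle : ∀ I : LieIdeal K L, IsLieAbelian I → finrank K I ≤ n) : betaInv K L = n :=
  IsGreatest.csSup_eq ⟨h, by rintro _ ⟨I, hI, rfl⟩; exact hle I hI⟩

theorem LieSubalgebra.lie_eq_zero_of_isLieAbelian {A : LieSubalgebra K L} (hA : IsLieAbelian A)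
    {x y : L} (hx : x ∈ A) (hy : y ∈ A) : ⁅x, y⁆ = 0 :=
  congrArg Subtype.val (hA.trivial ⟨x, hx⟩ ⟨y, hy⟩)

theorem LieIdeal.lie_eq_zero_of_isLieAbelian {I : LieIdeal K L} (hI : IsLieAbelian I)
    {x y : L} (hx : x ∈ I) (hy : y ∈ I) : ⁅x, y⁆ = 0 :=
  congrArg Subtype.val (hI.trivial ⟨x, hx⟩ ⟨y, hy⟩)

theorem lie_eq_zero_of_mem_span_pair {a c x y : L} (hac : ⁅a, c⁆ = 0)
    (hx : x ∈ Submodule.span K {a, c}) (hy : y ∈ Submodule.span K {a, c}) : ⁅x, y⁆ = 0 := by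
  obtain ⟨s, t, rfl⟩ := Submodule.mem_span_pair.mp hx
  obtain ⟨s', t', rfl⟩ := Submodule.mem_span_pair.mp hy
  have hca : ⁅c, a⁆ = 0 := by rw [← lie_skew, hac, neg_zero]
  simp [hac, hca]

theorem exists_isLieAbelian_lieSubalgebra_span_pair {a c : L} (hac : ⁅a, c⁆ = 0) :
    ∃ A : LieSubalgebra K L, IsLieAbelian A ∧ A.toSubmodule = Submodule.span K {a, c} := by
  refine ⟨{ Submodule.span K {a, c} with
    lie_mem' := fun hx hy => by simp [lie_eq_zero_of_mem_span_pair hac hx hy] }, ⟨?_⟩, rfl⟩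
  rintro ⟨x, hx⟩ ⟨y, hy⟩
  exact Subtype.ext (lie_eq_zero_of_mem_span_pair hac hx hy)

theorem exists_isLieAbelian_lieIdeal_span_singleton {z : L}
    (hz : ∀ x : L, ⁅x, z⁆ ∈ K ∙ z) :
    ∃ I : LieIdeal K L, IsLieAbelian I ∧ I.toSubmodule = K ∙ z := by
  refine ⟨{ Submodule.span K {z} with
    lie_mem := fun {x m} hm => ?_ }, ⟨?_⟩, rfl⟩
  · obtain ⟨t, rfl⟩ := Submodule.mem_span_singleton.mp hm
    rw [lie_smul]
    exact Submodule.smul_mem _ _ (hz x)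
  · rintro ⟨x, hx⟩ ⟨y, hy⟩
    obtain ⟨s, rfl⟩ := Submodule.mem_span_singleton.mp hx
    obtain ⟨t, rfl⟩ := Submodule.mem_span_singleton.mp hy
    exact Subtype.ext (by simp)

theorem Module.Basis.mem_span_singleton_of_repr_eq_zero {ι M : Type*} [AddCommGroup M]
    [Module K M] (b : Basis ι K M) {j : ι} {v : M} (hv : ∀ i ≠ j, b.repr v i = 0) :
    v ∈ K ∙ b j := by
  refine Submodule.mem_span_singleton.mpr ⟨b.repr v j, b.ext_elem fun i => ?_⟩
  by_cases hij : i = j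
  · simp [hij]
  · simp [hv i hij, Ne.symm hij]

theorem Module.Basis.finrank_span_pair {ι M : Type*} [AddCommGroup M] [Module K M]
    (b : Basis ι K M) {i j : ι} (hij : i ≠ j) : finrank K (Submodule.span K {b i, b j}) = 2 := by
  have hli : LinearIndependent K ![b i, b j] := LinearIndependent.pair_iff.mpr
    ((LinearIndepOn.pair_iff b hij).mp (b.linearIndependent.linearIndepOn _))
  rw [← Matrix.range_cons_cons_empty (b i) (b j) ![]]
  exact finrank_span_eq_card hli

end

section

variable {L : Type*} [LieRing L] [LieAlgebra ℝ L]

structure HasStructureConstants (b : Basis (Fin 4) ℝ L) : Prop where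
  lie01 : ⁅b 0, b 1⁆ = b 1 - b 2
  lie02 : ⁅b 0, b 2⁆ = b 1 + b 2
  lie03 : ⁅b 0, b 3⁆ = (2 : ℝ) • b 3
  lie12 : ⁅b 1, b 2⁆ = b 3
  lie13 : ⁅b 1, b 3⁆ = 0
  lie23 : ⁅b 2, b 3⁆ = 0

namespace HasStructureConstants

variable {b : Basis (Fin 4) ℝ L} (hb : HasStructureConstants b)
include hb

theorem repr_lie (u v : L) :
    ⇑(b.repr ⁅u, v⁆) = ![0,
      b.repr u 0 * b.repr v 1 - b.repr u 1 * b.repr v 0 +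
        (b.repr u 0 * b.repr v 2 - b.repr u 2 * b.repr v 0),
      -(b.repr u 0 * b.repr v 1 - b.repr u 1 * b.repr v 0) +
        (b.repr u 0 * b.repr v 2 - b.repr u 2 * b.repr v 0),
      2 * (b.repr u 0 * b.repr v 3 - b.repr u 3 * b.repr v 0) +
        (b.repr u 1 * b.repr v 2 - b.repr u 2 * b.repr v 1)] := by
  have h10 : ⁅b 1, b 0⁆ = -(b 1 - b 2) := by rw [← lie_skew, hb.lie01]
  have h20 : ⁅b 2, b 0⁆ = -(b 1 + b 2) := by rw [← lie_skew, hb.lie02]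
  have h30 : ⁅b 3, b 0⁆ = -((2 : ℝ) • b 3) := by rw [← lie_skew, hb.lie03]
  have h21 : ⁅b 2, b 1⁆ = -b 3 := by rw [← lie_skew, hb.lie12]
  have h31 : ⁅b 3, b 1⁆ = 0 := by rw [← lie_skew, hb.lie13, neg_zero]
  have h32 : ⁅b 3, b 2⁆ = 0 := by rw [← lie_skew, hb.lie23, neg_zero]
  conv_lhs =>
    rw [← b.sum_repr u, ← b.sum_repr v]
    simp only [Fin.sum_univ_four, add_lie, lie_add, smul_lie, lie_smul, lie_self, smul_zero,
      hb.lie01, hb.lie02, hb.lie03, hb.lie12, hb.lie13, hb.lie23, h10, h20, h30, h21, h31, h32]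
  ext i
  fin_cases i <;> simp <;> ring

theorem lie_basis_three (v : L) : ⁅v, b 3⁆ = (2 * b.repr v 0) • b 3 :=
  b.ext_elem fun i => by fin_cases i <;> simp [hb.repr_lie]

theorem repr_relations_of_lie_eq_zero {x y : L} (h : ⁅x, y⁆ = 0) :
    b.repr x 0 * b.repr y 1 = b.repr x 1 * b.repr y 0 ∧
      b.repr x 0 * b.repr y 2 = b.repr x 2 * b.repr y 0 ∧
      2 * (b.repr x 0 * b.repr y 3 - b.repr x 3 * b.repr y 0) +
        (b.repr x 1 * b.repr y 2 - b.repr x 2 * b.repr y 1) = 0 := by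
  have hc (i : Fin 4) := congrFun (hb.repr_lie x y) i
  simp only [h, map_zero, Finsupp.coe_zero, Pi.zero_apply] at hc
  have e1 := hc 1
  have e2 := hc 2
  have e3 := hc 3
  simp only [Matrix.cons_val] at e1 e2 e3
  exact ⟨by linarith, by linarith, by linarith⟩

theorem exists_le_span_pair {A : LieSubalgebra ℝ L} (hA : IsLieAbelian A) :
    ∃ u, A.toSubmodule ≤ Submodule.span ℝ {u, b 3} := by
  suffices ∃ u, ∀ x ∈ A, ∃ a : ℝ, b.repr x 0 = a * b.repr u 0 ∧ b.repr x 1 = a * b.repr u 1 ∧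
      b.repr x 2 = a * b.repr u 2 by
    obtain ⟨u, hu⟩ := this
    refine ⟨u, fun x hx => ?_⟩
    obtain ⟨a, h0, h1, h2⟩ := hu x hx
    have hxu : x - a • u ∈ ℝ ∙ b 3 :=
      b.mem_span_singleton_of_repr_eq_zero fun i hi => by fin_cases i <;> simp_all
    exact Submodule.mem_span_insert.mpr ⟨a, _, hxu, (add_sub_cancel _ _).symm⟩
  have rel {x y : L} (hx : x ∈ A) (hy : y ∈ A) :=
    hb.repr_relations_of_lie_eq_zero (LieSubalgebra.lie_eq_zero_of_isLieAbelian hA hx hy)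
  by_cases h0 : ∃ u ∈ A, b.repr u 0 ≠ 0
  · obtain ⟨u, hu, hu0⟩ := h0
    refine ⟨u, fun x hx => ⟨b.repr x 0 / b.repr u 0, ?_⟩⟩
    obtain ⟨e1, e2, -⟩ := rel hu hx
    exact ⟨by field_simp, by field_simp; linarith, by field_simp; linarith⟩
  push Not at h0
  by_cases h1 : ∃ u ∈ A, b.repr u 1 ≠ 0
  · obtain ⟨u, hu, hu1⟩ := h1
    refine ⟨u, fun x hx => ⟨b.repr x 1 / b.repr u 1, ?_⟩⟩
    obtain ⟨-, -, e3⟩ := rel hu hx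
    rw [h0 u hu, h0 x hx] at e3
    exact ⟨by simp [h0 u hu, h0 x hx], by field_simp, by field_simp; linarith⟩
  push Not at h1
  exact ⟨b 2, fun x hx => ⟨b.repr x 2, by simp [h0 x hx, h1 x hx]⟩⟩

theorem finrank_le_two_of_isLieAbelian {A : LieSubalgebra ℝ L} (hA : IsLieAbelian A) :
    finrank ℝ A ≤ 2 := by
  obtain ⟨u, hu⟩ := hb.exists_le_span_pair hA
  have : Module.Finite ℝ (Submodule.span ℝ {u, b 3}) := .span_of_finite ℝ (Set.toFinite _)
  classical
  calc finrank ℝ A = finrank ℝ A.toSubmodule := rfl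
    _ ≤ finrank ℝ (Submodule.span ℝ {u, b 3}) := Submodule.finrank_mono hu
    _ ≤ 2 := (finrank_span_le_card _).trans (by simpa using Finset.card_le_two)

theorem repr_zero_eq_zero_of_mem {I : LieIdeal ℝ L} (hI : IsLieAbelian I) {v : L} (hv : v ∈ I) :
    b.repr v 0 = 0 := by
  have h := LieIdeal.lie_eq_zero_of_isLieAbelian hI hv (lie_mem_left ℝ L I v (b 3) hv)
  rw [hb.lie_basis_three, lie_smul, hb.lie_basis_three, smul_smul, smul_eq_zero] at h
  simpa using h.resolve_right (b.ne_zero 3)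

theorem le_span_of_isLieAbelian {I : LieIdeal ℝ L} (hI : IsLieAbelian I) :
    I.toSubmodule ≤ ℝ ∙ b 3 := by
  intro v hv
  have hv0 := hb.repr_zero_eq_zero_of_mem hI hv
  obtain ⟨-, -, e3⟩ := hb.repr_relations_of_lie_eq_zero
    (LieIdeal.lie_eq_zero_of_isLieAbelian hI hv (I.lie_mem (x := b 0) hv))
  have hsq : b.repr v 1 ^ 2 + b.repr v 2 ^ 2 = 0 := by
    simp [hb.repr_lie, hv0] at e3
    linear_combination -e3
  obtain ⟨hv1, hv2⟩ := (add_eq_zero_iff_of_nonneg (sq_nonneg _) (sq_nonneg _)).mp hsq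
  exact b.mem_span_singleton_of_repr_eq_zero fun i hi => by fin_cases i <;> simp_all

theorem finrank_le_one_of_isLieAbelian {I : LieIdeal ℝ L} (hI : IsLieAbelian I) :
    finrank ℝ I ≤ 1 :=
  calc finrank ℝ I = finrank ℝ I.toSubmodule := rfl
    _ ≤ finrank ℝ (ℝ ∙ b 3) := Submodule.finrank_mono (hb.le_span_of_isLieAbelian hI)
    _ = 1 := finrank_span_singleton (b.ne_zero 3)

theorem alphaInv_eq_two : alphaInv ℝ L = 2 := by
  obtain ⟨A, hA, hAspan⟩ := exists_isLieAbelian_lieSubalgebra_span_pair (K := ℝ) hb.lie13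
  refine alphaInv_eq ⟨A, hA, ?_⟩ fun A hA => hb.finrank_le_two_of_isLieAbelian hA
  change finrank ℝ A.toSubmodule = 2
  rw [hAspan, b.finrank_span_pair (by decide)]

theorem betaInv_eq_one : betaInv ℝ L = 1 := by
  obtain ⟨I, hI, hIspan⟩ := exists_isLieAbelian_lieIdeal_span_singleton (K := ℝ)
    fun x => hb.lie_basis_three x ▸ Submodule.smul_mem _ _ (Submodule.mem_span_singleton_self _)
  refine betaInv_eq ⟨I, hI, ?_⟩ fun I hI => hb.finrank_le_one_of_isLieAbelian hI
  change finrank ℝ I.toSubmodule = 1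
  rw [hIspan, finrank_span_singleton (b.ne_zero 3)]

end HasStructureConstants

end

/-- The real 4-dimensional solvable Lie algebra with brackets
[x1,x2]=x2-x3, [x1,x3]=x2+x3, [x1,x4]=2x4, [x2,x3]=x4 (all other brackets zero)
satisfies α(g) = 2 and β(g) = 1. -/
theorem stmt_8 (L : Type*) [LieRing L] [LieAlgebra ℝ L]
    (b : Basis (Fin 4) ℝ L)
    (h12 : ⁅b 0, b 1⁆ = b 1 - b 2) (h13 : ⁅b 0, b 2⁆ = b 1 + b 2)
    (h14 : ⁅b 0, b 3⁆ = (2 : ℝ) • b 3) (h23 : ⁅b 1, b 2⁆ = b 3)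
    (h24 : ⁅b 1, b 3⁆ = 0) (h34 : ⁅b 2, b 3⁆ = 0) :
    alphaInv ℝ L = 2 ∧ betaInv ℝ L = 1 :=
  have hb : HasStructureConstants b := ⟨h12, h13, h14, h23, h24, h34⟩
  ⟨hb.alphaInv_eq_two, hb.betaInv_eq_one⟩
end

section
/- Let φ: sl₂(ℂ) → Der(ℂ^ℓ) be a Lie algebra homomorphism and g = sl₂(ℂ) ⋉_φ ℂ^ℓ the corresponding semidirect product, of dimension n = ℓ + 3. If g contains an abelian subalgebra of dimension n−2, then φ = 0. -/
/-!
The projection of an abelian subalgebra `W` to `sl₂` is a commuting subspace, and commuting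
elements of `sl₂` have proportional coordinates (their cross product vanishes), so this
projection has dimension at most one. As `dim W = ℓ + 1`, counting dimensions gives
`0 × ℂ^ℓ ⊆ W` together with some `(x, a) ∈ W` with `x ≠ 0`. Commuting with `0 × ℂ^ℓ` forces
`φ x = 0`, and since `sl₂` is simple the kernel of `φ` is everything.
-/
open Module
attribute [local instance 100] LieRing.ofAssociativeRing

namespace Sl2

open LieAlgebra.SpecialLinear

variable {K : Type*} [Field K]

variable (K) in
def e : sl (Fin 2) K := single 0 1 (by decide) 1

variable (K) in
def f : sl (Fin 2) K := single 1 0 (by decide) 1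

variable (K) in
def h : sl (Fin 2) K := singleSubSingle 0 1 1

lemma val_one_one (x : sl (Fin 2) K) : x.val 1 1 = -x.val 0 0 := by
  have hx : Matrix.trace x.val = 0 := x.property
  rw [Matrix.trace_fin_two] at hx
  linear_combination hx

lemma eq_smul_h_add_smul_e_add_smul_f (x : sl (Fin 2) K) :
    x = x.val 0 0 • h K + x.val 0 1 • e K + x.val 1 0 • f K := by
  ext i j
  fin_cases i <;> fin_cases j <;> simp [e, f, h, val_one_one]

lemma isSl2Triple : IsSl2Triple (h K) (e K) (f K) where
  h_ne_zero := fun h0 => by simpa [h] using congrArg (fun x : sl (Fin 2) K => x.val 0 0) h0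
  lie_e_f := by
    ext i j; fin_cases i <;> fin_cases j <;> simp [e, f, h, Ring.lie_def]
  lie_h_e_nsmul := by
    ext i j; fin_cases i <;> fin_cases j <;> simp [e, h, Ring.lie_def, Matrix.mul_apply]; norm_num
  lie_h_f_nsmul := by
    ext i j; fin_cases i <;> fin_cases j <;> simp [f, h, Ring.lie_def, Matrix.mul_apply]; norm_num

lemma lie_e_lie_e (x : sl (Fin 2) K) : ⁅e K, ⁅e K, x⁆⁆ = (-2 * x.val 1 0) • e K := by
  ext i j
  fin_cases i <;> fin_cases j <;> simp [e, Ring.lie_def, Matrix.mul_apply, val_one_one]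
  ring

lemma lie_f_lie_f (x : sl (Fin 2) K) : ⁅f K, ⁅f K, x⁆⁆ = (-2 * x.val 0 1) • f K := by
  ext i j
  fin_cases i <;> fin_cases j <;> simp [f, Ring.lie_def, Matrix.mul_apply, val_one_one]
  ring

def coords : sl (Fin 2) K →ₗ[K] Fin 3 → K where
  toFun x := ![x.val 0 0, x.val 0 1, x.val 1 0]
  map_add' x y := by ext i; fin_cases i <;> simp
  map_smul' c x := by ext i; fin_cases i <;> simp

lemma coords_injective : Function.Injective (coords : sl (Fin 2) K →ₗ[K] Fin 3 → K) := by
  rw [← LinearMap.ker_eq_bot, LinearMap.ker_eq_bot']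
  intro x hx
  have h00 := congrFun hx 0
  have h01 := congrFun hx 1
  have h10 := congrFun hx 2
  simp [coords] at h00 h01 h10
  rw [eq_smul_h_add_smul_e_add_smul_f x, h00, h01, h10]
  simp

/-- For `x = !![a, b; c, -a]`, `coords x = ![a, b, c]`, and `⁅x, y⁆` has coordinates
`(w 0, 2 * w 2, 2 * w 1)` where `w = coords x ×₃ coords y`. -/
lemma crossProduct_coords_eq_zero_of_lie_eq_zero [NeZero (2 : K)] {x y : sl (Fin 2) K}
    (hxy : ⁅x, y⁆ = 0) : crossProduct (coords x) (coords y) = 0 := by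
  have h00 := congrArg (fun z : sl (Fin 2) K => z.val 0 0) hxy
  have h01 := congrArg (fun z : sl (Fin 2) K => z.val 0 1) hxy
  have h10 := congrArg (fun z : sl (Fin 2) K => z.val 1 0) hxy
  simp only [LieSubalgebra.coe_bracket, Ring.lie_def, Matrix.sub_apply, Matrix.mul_apply,
    Fin.sum_univ_two, val_one_one, ZeroMemClass.coe_zero, Matrix.zero_apply] at h00 h01 h10
  ext i
  fin_cases i <;>
    simp only [coords, LinearMap.coe_mk, AddHom.coe_mk, Fin.zero_eta, Fin.mk_one, Fin.reduceFinMk,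
      cross_apply, Matrix.cons_val_zero, Matrix.cons_val_one, Matrix.cons_val, Pi.zero_apply]
  · linear_combination h00
  · refine (mul_eq_zero.1 ?_).resolve_left (two_ne_zero (α := K))
    linear_combination h10
  · refine (mul_eq_zero.1 ?_).resolve_left (two_ne_zero (α := K))
    linear_combination h01

lemma finrank_le_one_of_lie_eq_zero [NeZero (2 : K)] (S : Submodule K (sl (Fin 2) K))
    (hS : ∀ x ∈ S, ∀ y ∈ S, ⁅x, y⁆ = 0) : finrank K S ≤ 1 := by
  by_contra! hS2
  obtain ⟨v, hv⟩ := exists_linearIndependent_of_le_finrank (R := K) (M := S) hS2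
  have hind : LinearIndependent K ![coords (v 0 : sl (Fin 2) K), coords (v 1 : sl (Fin 2) K)] := by
    have := hv.map' (coords ∘ₗ S.subtype)
      (LinearMap.ker_eq_bot.2 (coords_injective.comp Subtype.val_injective))
    have hv2 : ![coords (v 0 : sl (Fin 2) K), coords (v 1 : sl (Fin 2) K)] =
        (coords ∘ₗ S.subtype) ∘ v := by
      ext i : 1; fin_cases i <;> rfl
    rw [hv2]
    exact this
  exact crossProduct_ne_zero_iff_linearIndependent.2 hind
    (crossProduct_coords_eq_zero_of_lie_eq_zero (hS _ (v 0).2 _ (v 1).2))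

lemma eq_top_of_mem_of_ne_zero [NeZero (2 : K)] (I : LieIdeal K (sl (Fin 2) K))
    {x : sl (Fin 2) K} (hxI : x ∈ I) (hx : x ≠ 0) : I = ⊤ := by
  have t := isSl2Triple (K := K)
  have two : (2 : K) ≠ 0 := two_ne_zero
  have h_of_e : e K ∈ I → h K ∈ I := fun he => t.lie_e_f ▸ lie_mem_left K _ I _ _ he
  have h_of_f : f K ∈ I → h K ∈ I := fun hf => t.lie_e_f ▸ I.lie_mem hf
  have e_of_h : h K ∈ I → e K ∈ I := fun hh => by
    have := lie_mem_left K _ I _ (e K) hh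
    rw [t.lie_h_e_smul K] at this
    exact (I.smul_mem_iff two).1 this
  have f_of_h : h K ∈ I → f K ∈ I := fun hh => by
    have := lie_mem_left K _ I _ (f K) hh
    rw [t.lie_lie_smul_f K, neg_mem_iff] at this
    exact (I.smul_mem_iff two).1 this
  suffices hh : h K ∈ I by
    rw [eq_top_iff]
    intro z _
    rw [eq_smul_h_add_smul_e_add_smul_f z]
    exact add_mem (add_mem (I.smul_mem _ hh) (I.smul_mem _ (e_of_h hh))) (I.smul_mem _ (f_of_h hh))
  by_cases h10 : x.val 1 0 = 0
  · by_cases h01 : x.val 0 1 = 0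
    · have h00 : x.val 0 0 ≠ 0 := fun h00 => hx (by
        rw [eq_smul_h_add_smul_e_add_smul_f x, h00, h01, h10]; simp)
      have : x = x.val 0 0 • h K := by
        conv_lhs => rw [eq_smul_h_add_smul_e_add_smul_f x, h01, h10]
        simp
      rw [this] at hxI
      exact (I.smul_mem_iff h00).1 hxI
    · apply h_of_f
      have := I.lie_mem (x := f K) (I.lie_mem (x := f K) hxI)
      rw [lie_f_lie_f] at this
      exact (I.smul_mem_iff (mul_ne_zero (neg_ne_zero.2 two) h01)).1 this
  · apply h_of_e
    have := I.lie_mem (x := e K) (I.lie_mem (x := e K) hxI)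
    rw [lie_e_lie_e] at this
    exact (I.smul_mem_iff (mul_ne_zero (neg_ne_zero.2 two) h10)).1 this

instance [NeZero (2 : K)] : LieAlgebra.IsSimple K (sl (Fin 2) K) where
  eq_bot_or_eq_top I := by
    refine or_iff_not_imp_left.2 fun hI => ?_
    obtain ⟨x, hxI, hx⟩ := not_forall₂.1 (mt (LieSubmodule.eq_bot_iff I).2 hI)
    exact eq_top_of_mem_of_ne_zero I hxI hx
  non_abelian := sl_non_abelian (Fin 2) K (by simp)

end Sl2

lemma LieHom.eq_zero_of_apply_eq_zero {K L L' : Type*} [CommRing K] [LieRing L] [LieAlgebra K L]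
    [LieAlgebra.IsSimple K L] [LieRing L'] [LieAlgebra K L'] (φ : L →ₗ⁅K⁆ L') {x : L}
    (hx : x ≠ 0) (hφx : φ x = 0) : φ = 0 := by
  have hker : φ.ker = ⊤ :=
    (LieAlgebra.IsSimple.eq_bot_or_eq_top φ.ker).resolve_left
      fun h => hx ((LieSubmodule.mem_bot x).1 (h ▸ φ.mem_ker.2 hφx))
  ext y
  exact φ.mem_ker.1 (hker ▸ LieSubmodule.mem_top y)

section Prod

variable {K L V : Type*} [Field K] [AddCommGroup L] [Module K L] [AddCommGroup V] [Module K V]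
  [FiniteDimensional K V]

lemma Submodule.exists_mem_fst_ne_zero_of_finrank_lt (W : Submodule K (L × V))
    (hW : finrank K V < finrank K W) : ∃ p ∈ W, p.1 ≠ 0 := by
  by_contra! h
  have hinj : Function.Injective ((LinearMap.snd K L V).domRestrict W) := by
    intro p q hpq
    exact Subtype.ext (Prod.ext (by rw [h _ p.2, h _ q.2]) hpq)
  exact hW.not_ge (LinearMap.finrank_le_finrank_of_injective hinj)

lemma Submodule.inr_mem_of_finrank_map_fst_le_one (W : Submodule K (L × V))
    (hW : finrank K W = finrank K V + 1) (hfst : finrank K (W.map (LinearMap.fst K L V)) ≤ 1)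
    (v : V) : (0, v) ∈ W := by
  have : FiniteDimensional K W := Module.finite_of_finrank_eq_succ hW
  let π := (LinearMap.fst K L V).domRestrict W
  have hπ : LinearMap.range π = W.map (LinearMap.fst K L V) := LinearMap.range_domRestrict _ _
  let ι := (LinearMap.snd K L V).domRestrict W ∘ₗ (LinearMap.ker π).subtype
  have hι : Function.Injective ι := by
    intro p q hpq
    have hp : (p : W).val.1 = 0 := p.2
    have hq : (q : W).val.1 = 0 := q.2
    exact Subtype.ext (Subtype.ext (Prod.ext (hp.trans hq.symm) hpq))
  have hker : finrank K V ≤ finrank K (LinearMap.ker π) := by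
    have := π.finrank_range_add_finrank_ker
    rw [hπ] at this
    omega
  have hrange : LinearMap.range ι = ⊤ := Submodule.eq_top_of_finrank_eq <|
    (LinearMap.finrank_range_of_inj hι).trans
      (le_antisymm (LinearMap.finrank_le_finrank_of_injective hι) hker)
  obtain ⟨p, hp⟩ := LinearMap.range_eq_top.1 hrange v
  have hp0 : (p : W).val.1 = 0 := p.2
  have : (p : W).val = (0, v) := Prod.ext hp0 hp
  exact this ▸ (p : W).2

end Prod

/-- If the semidirect product sl₂(ℂ) ⋉_φ ℂ^ℓ (with bracket
[(x,a),(y,b)] = ([x,y], φ(x)b - φ(y)a)) contains an abelian subalgebra of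
dimension n - 2 = ℓ + 1, then φ = 0. -/
theorem stmt_15 (ℓ : ℕ)
    (φ : LieAlgebra.SpecialLinear.sl (Fin 2) ℂ →ₗ⁅ℂ⁆ Module.End ℂ (Fin ℓ → ℂ))
    (W : Submodule ℂ ((LieAlgebra.SpecialLinear.sl (Fin 2) ℂ) × (Fin ℓ → ℂ)))
    (hdim : finrank ℂ W = ℓ + 1)
    (habelian : ∀ p ∈ W, ∀ q ∈ W,
      (⁅p.1, q.1⁆ : LieAlgebra.SpecialLinear.sl (Fin 2) ℂ) = 0 ∧
        φ p.1 q.2 - φ q.1 p.2 = 0) :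
    φ = 0 := by
  have hfst : finrank ℂ (W.map (LinearMap.fst ℂ _ _)) ≤ 1 :=
    Sl2.finrank_le_one_of_lie_eq_zero _ <| by
      rintro _ ⟨p, hp, rfl⟩ _ ⟨q, hq, rfl⟩
      exact (habelian p hp q hq).1
  have hdimW : finrank ℂ W = finrank ℂ (Fin ℓ → ℂ) + 1 := by simpa using hdim
  have hinr := W.inr_mem_of_finrank_map_fst_le_one hdimW hfst
  obtain ⟨p, hp, hp0⟩ := W.exists_mem_fst_ne_zero_of_finrank_lt (by omega)
  refine φ.eq_zero_of_apply_eq_zero hp0 (LinearMap.ext fun a => ?_)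
  simpa using (habelian _ (hinr a) p hp).2
end

section
/- Let g be a k-abelian filiform nilpotent Lie algebra of dimension n ≥ k+3 ≥ 6 over a field of characteristic zero. Then β(g) = n − k = dim C^k(g), and C^k(g) is the unique abelian ideal of maximal dimension; moreover ⌈n/2⌉ ≤ β(g) ≤ n−3. -/
open Module

/-!
Write `C t` for `lowerCentralSeries K L L t`, the term `C^(t+1)(g)` of the paper. For a filiform
algebra `C 1` has codimension two in `L` and `C (t+1)` has codimension one in `C t` for `t ≥ 1`.

If an ideal `I ≤ C t` is not contained in `C (t+1)`, then `C t = I + C (t+1)` by dimension, and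
since `L` is nilpotent this forces `C t = I` (a Nakayama argument along the lower central series).
Hence an abelian ideal inside `C 1` descends the series until the first abelian term `C (k-1)`:
every abelian ideal lies in `C^k(g)`. An abelian ideal `I` not inside `C 1` cannot exist:
`dim L / C 1 = 2` makes `[L, L] ≤ I + C 2`, so `C 1 ≤ I` would be abelian. Finally, as `C (k-1)`
has codimension one in `C (k-2)`, `[C (k-2), C (k-2)] ≤ [C (k-2), C (k-1)] ≤ C (2k-2)`, which is
nonzero since `C (k-2)` is not abelian; so `2k ≤ n`, i.e. `⌈n/2⌉ ≤ n - k`.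
-/

open LieModule

theorem Submodule.exists_span_singleton_sup_eq {K V : Type*} [Field K] [AddCommGroup V]
    [Module K V] [FiniteDimensional K V] {N M : Submodule K V} (hle : N ≤ M)
    (h : finrank K M ≤ finrank K N + 1) : ∃ e ∈ M, (K ∙ e) ⊔ N = M := by
  rcases hle.eq_or_lt with rfl | hlt
  · exact ⟨0, zero_mem _, by simp⟩
  obtain ⟨e, heM, heN⟩ := SetLike.exists_of_lt hlt
  refine ⟨e, heM, Submodule.eq_of_le_of_finrank_le
    (sup_le ((Submodule.span_singleton_le_iff_mem e M).mpr heM) hle) ?_⟩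
  have hNe : N < (K ∙ e) ⊔ N := right_lt_sup.mpr fun h =>
    heN (h (Submodule.mem_span_singleton_self e))
  have := Submodule.finrank_lt_finrank_of_lt hNe
  omega

theorem lie_mem_of_mem_span_singleton_sup {R L : Type*} [CommRing R] [LieRing L] [LieAlgebra R L]
    {B P : Submodule R L} {e x y : L}
    (hx : x ∈ (R ∙ e) ⊔ B) (hy : y ∈ (R ∙ e) ⊔ B)
    (hP : ∀ a ∈ (R ∙ e) ⊔ B, ∀ b ∈ B, ⁅a, b⁆ ∈ P) : ⁅x, y⁆ ∈ P := by
  have he : e ∈ (R ∙ e) ⊔ B :=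
    Submodule.mem_sup_left (Submodule.mem_span_singleton_self e)
  obtain ⟨_, hc, b, hb, rfl⟩ := Submodule.mem_sup.mp hy
  obtain ⟨c, rfl⟩ := Submodule.mem_span_singleton.mp hc
  obtain ⟨_, hd, b', hb', rfl⟩ := Submodule.mem_sup.mp hx
  obtain ⟨d, rfl⟩ := Submodule.mem_span_singleton.mp hd
  have hxe : ⁅d • e + b', e⁆ ∈ P := by
    rw [add_lie, smul_lie, lie_self, smul_zero, zero_add, ← lie_skew]
    exact neg_mem (hP e he b' hb')
  rw [lie_add, lie_smul]
  exact add_mem (P.smul_mem c hxe) (hP _ hx b hb)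

namespace LieModule

section Module

variable {R L M : Type*} [CommRing R] [LieRing L] [LieAlgebra R L]
  [AddCommGroup M] [Module R M] [LieRingModule L M]

theorem lie_mem_lowerCentralSeries_succ (x : L) {m : M} {i : ℕ}
    (hm : m ∈ lowerCentralSeries R L M i) : ⁅x, m⁆ ∈ lowerCentralSeries R L M (i + 1) := by
  rw [lowerCentralSeries_succ]
  exact LieSubmodule.lie_mem_lie (LieSubmodule.mem_top x) hm

variable [LieModule R L M]

theorem lowerCentralSeries_le_of_le_sup [IsNilpotent L M] (N : LieSubmodule R L M) {s : ℕ}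
    (h : lowerCentralSeries R L M s ≤ N ⊔ lowerCentralSeries R L M (s + 1)) :
    lowerCentralSeries R L M s ≤ N := by
  have key : ∀ j, lowerCentralSeries R L M s ≤ N ⊔ lowerCentralSeries R L M (s + j) := by
    intro j
    induction j with
    | zero => exact le_sup_right
    | succ j ih =>
      have hnext :
          lowerCentralSeries R L M (s + 1) ≤ N ⊔ lowerCentralSeries R L M (s + j + 1) := by
        rw [lowerCentralSeries_succ, lowerCentralSeries_succ]
        calc ⁅(⊤ : LieIdeal R L), lowerCentralSeries R L M s⁆
            ≤ ⁅⊤, N ⊔ lowerCentralSeries R L M (s + j)⁆ := LieSubmodule.mono_lie_right _ ih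
          _ = ⁅⊤, N⁆ ⊔ ⁅⊤, lowerCentralSeries R L M (s + j)⁆ := LieSubmodule.lie_sup _ _ _
          _ ≤ N ⊔ ⁅⊤, lowerCentralSeries R L M (s + j)⁆ :=
            sup_le_sup_right (LieSubmodule.lie_le_right _ _) _
      calc lowerCentralSeries R L M s ≤ N ⊔ lowerCentralSeries R L M (s + 1) := h
        _ ≤ N ⊔ (N ⊔ lowerCentralSeries R L M (s + j + 1)) := sup_le_sup_left hnext _
        _ = N ⊔ lowerCentralSeries R L M (s + (j + 1)) := by rw [← sup_assoc, sup_idem]; rfl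
  obtain ⟨k, hk⟩ := IsNilpotent.nilpotent R L M
  refine (key k).trans (sup_le le_rfl ?_)
  exact (antitone_lowerCentralSeries R L M (Nat.le_add_left k s)).trans (hk.le.trans bot_le)

end Module

section Algebra

variable {R L : Type*} [CommRing R] [LieRing L] [LieAlgebra R L]

theorem lie_mem_lowerCentralSeries {i j : ℕ} {x y : L} (hx : x ∈ lowerCentralSeries R L L i)
    (hy : y ∈ lowerCentralSeries R L L j) : ⁅x, y⁆ ∈ lowerCentralSeries R L L (i + j + 1) := by
  induction j generalizing i x y with
  | zero =>
    rw [← lie_skew]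
    exact neg_mem (lie_mem_lowerCentralSeries_succ y hx)
  | succ j ih =>
    rw [lowerCentralSeries_succ, ← LieSubmodule.mem_toSubmodule,
      LieSubmodule.lieIdeal_oper_eq_linear_span] at hy
    induction hy using Submodule.span_induction with
    | mem _ hzw =>
      obtain ⟨⟨z, -⟩, ⟨w, hw⟩, rfl⟩ := hzw
      have hxz : ⁅x, z⁆ ∈ lowerCentralSeries R L L (i + 1) := by
        rw [← lie_skew]
        exact neg_mem (lie_mem_lowerCentralSeries_succ z hx)
      rw [leibniz_lie]
      refine add_mem ?_ (lie_mem_lowerCentralSeries_succ z (ih hx hw))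
      have := ih hxz hw
      rwa [show i + 1 + j + 1 = i + (j + 1) + 1 by omega] at this
    | zero => simp
    | add _ _ _ _ hu hv => rw [lie_add]; exact add_mem hu hv
    | smul c _ _ hu => rw [lie_smul]; exact Submodule.smul_mem _ c hu

end Algebra

section FiniteDimensional

variable {K L : Type*} [Field K] [LieRing L] [LieAlgebra K L] [FiniteDimensional K L]

theorem isLieAbelian_lowerCentralSeries_of_finrank_le {s : ℕ}
    (hcodim : finrank K (lowerCentralSeries K L L s) ≤
      finrank K (lowerCentralSeries K L L (s + 1)) + 1)
    (hbot : lowerCentralSeries K L L (2 * s + 2) = ⊥) :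
    IsLieAbelian (lowerCentralSeries K L L s) := by
  obtain ⟨e, -, hsup⟩ := Submodule.exists_span_singleton_sup_eq
    (show (lowerCentralSeries K L L (s + 1)).toSubmodule ≤ (lowerCentralSeries K L L s).toSubmodule
      from antitone_lowerCentralSeries K L L s.le_succ) hcodim
  rw [LieSubmodule.lie_abelian_iff_lie_self_eq_bot, eq_bot_iff, LieSubmodule.lie_le_iff, ← hbot]
  intro x hx y hy
  rw [← LieSubmodule.mem_toSubmodule, ← hsup] at hx hy
  refine lie_mem_of_mem_span_singleton_sup hx hy fun a ha b hb => ?_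
  rw [hsup] at ha
  have := lie_mem_lowerCentralSeries ha hb
  rwa [show s + (s + 1) + 1 = 2 * s + 2 by omega] at this

variable [LieRing.IsNilpotent L]

theorem eq_lowerCentralSeries_of_le_of_not_le {I : LieIdeal K L} {t : ℕ}
    (hle : I ≤ lowerCentralSeries K L L t) (hnle : ¬ I ≤ lowerCentralSeries K L L (t + 1))
    (hcodim : finrank K (lowerCentralSeries K L L t) ≤
      finrank K (lowerCentralSeries K L L (t + 1)) + 1) :
    I = lowerCentralSeries K L L t := by
  refine le_antisymm hle (lowerCentralSeries_le_of_le_sup I (le_of_eq ?_))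
  have hlt := Submodule.finrank_lt_finrank_of_lt
    (show (lowerCentralSeries K L L (t + 1)).toSubmodule <
      (I ⊔ lowerCentralSeries K L L (t + 1)).toSubmodule from right_lt_sup.mpr hnle)
  refine (LieSubmodule.toSubmodule_injective (Submodule.eq_of_le_of_finrank_le ?_ ?_)).symm
  · exact sup_le hle (antitone_lowerCentralSeries K L L t.le_succ)
  · exact hcodim.trans hlt

theorem le_lowerCentralSeries_of_isLieAbelian {I : LieIdeal K L} (hI : IsLieAbelian I)
    {s m : ℕ} (hsm : s ≤ m) (hs : I ≤ lowerCentralSeries K L L s)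
    (hcodim : ∀ t, s ≤ t → t < m → finrank K (lowerCentralSeries K L L t) ≤
      finrank K (lowerCentralSeries K L L (t + 1)) + 1)
    (hnab : ∀ t, s ≤ t → t < m → ¬ IsLieAbelian (lowerCentralSeries K L L t)) :
    I ≤ lowerCentralSeries K L L m := by
  induction m, hsm using Nat.le_induction with
  | base => exact hs
  | succ t hst ih =>
    have hIt := ih (fun u hu hut => hcodim u hu (by omega)) (fun u hu hut => hnab u hu (by omega))
    by_contra hnle
    apply hnab t hst (by omega)
    rwa [← eq_lowerCentralSeries_of_le_of_not_le hIt hnle (hcodim t hst (by omega))]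

theorem le_lowerCentralSeries_one_of_isLieAbelian
    (hcodim : finrank K L ≤ finrank K (lowerCentralSeries K L L 1) + 2)
    (hnab : ¬ IsLieAbelian (lowerCentralSeries K L L 1)) {I : LieIdeal K L}
    (hI : IsLieAbelian I) : I ≤ lowerCentralSeries K L L 1 := by
  by_contra hnle
  set N := I ⊔ lowerCentralSeries K L L 1
  have hN : finrank K (lowerCentralSeries K L L 1) < finrank K N :=
    Submodule.finrank_lt_finrank_of_lt
      (show (lowerCentralSeries K L L 1).toSubmodule < N.toSubmodule from right_lt_sup.mpr hnle)
  obtain ⟨y, -, hy⟩ := Submodule.exists_span_singleton_sup_eq (le_top : N.toSubmodule ≤ ⊤)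
    (by rw [finrank_top]; change _ ≤ finrank K N + 1; omega)
  have hbr : ⁅(⊤ : LieIdeal K L), N⁆ ≤ I ⊔ lowerCentralSeries K L L 2 := by
    rw [LieSubmodule.lie_sup, lowerCentralSeries_succ K L L 1]
    exact sup_le_sup_right (LieSubmodule.lie_le_right _ _) _
  have hsup : lowerCentralSeries K L L 1 ≤ I ⊔ lowerCentralSeries K L L 2 := by
    rw [lowerCentralSeries_succ, lowerCentralSeries_zero, LieSubmodule.lie_le_iff]
    intro a _ b _
    exact lie_mem_of_mem_span_singleton_sup (hy ▸ Submodule.mem_top) (hy ▸ Submodule.mem_top)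
      fun z _ w hw => hbr (LieSubmodule.lie_mem_lie (LieSubmodule.mem_top z) hw)
  have hC1 := lowerCentralSeries_le_of_le_sup I hsup
  rw [LieSubmodule.lie_abelian_iff_lie_self_eq_bot] at hI hnab
  exact hnab (eq_bot_iff.mpr (hI ▸ LieSubmodule.mono_lie hC1 hC1))

end FiniteDimensional

end LieModule

theorem stmt_17_general (K L : Type*) [Field K] [LieRing L] [LieAlgebra K L]
    [FiniteDimensional K L] [LieRing.IsNilpotent L] (n k : ℕ)
    (hk : 3 ≤ k) (hn : k + 3 ≤ n) (hdim : finrank K L = n)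
    (hfiliform : ∀ i : ℕ, 2 ≤ i → i ≤ n →
      finrank K (LieModule.lowerCentralSeries K L L (i - 1)) = n - i)
    (hkab : IsLieAbelian (LieModule.lowerCentralSeries K L L (k - 1)))
    (hkmin : ∀ j : ℕ, 1 ≤ j → j < k →
      ¬ IsLieAbelian (LieModule.lowerCentralSeries K L L (j - 1))) :
    betaInv K L = n - k ∧
      finrank K (LieModule.lowerCentralSeries K L L (k - 1)) = n - k ∧
      (∀ I : LieIdeal K L, IsLieAbelian I → finrank K I = n - k →
        I = LieModule.lowerCentralSeries K L L (k - 1)) ∧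
      (n + 1) / 2 ≤ betaInv K L ∧ betaInv K L ≤ n - 3 := by
  have hC (t : ℕ) (h1 : 1 ≤ t) (h2 : t < n) :
      finrank K (lowerCentralSeries K L L t) = n - (t + 1) := by
    simpa using hfiliform (t + 1) (by omega) (by omega)
  have hnab (t : ℕ) (ht : t + 1 < k) : ¬ IsLieAbelian (lowerCentralSeries K L L t) := by
    simpa using hkmin (t + 1) (by omega) ht
  have hCk : finrank K (lowerCentralSeries K L L (k - 1)) = n - k :=
    hfiliform k (by omega) (by omega)
  have hle (I : LieIdeal K L) (hI : IsLieAbelian I) : I ≤ lowerCentralSeries K L L (k - 1) :=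
    le_lowerCentralSeries_of_isLieAbelian hI (by omega : 1 ≤ k - 1)
      (le_lowerCentralSeries_one_of_isLieAbelian (by rw [hdim, hC 1 le_rfl (by omega)]; omega)
        (hnab 1 (by omega)) hI)
      (fun t h1 h2 => by rw [hC t h1 (by omega), hC (t + 1) (by omega) (by omega)]; omega)
      (fun t _ h2 => hnab t (by omega))
  have hbeta : betaInv K L = n - k := by
    refine IsGreatest.csSup_eq ⟨⟨_, hkab, hCk⟩, ?_⟩
    rintro _ ⟨I, hI, rfl⟩
    exact hCk ▸ Submodule.finrank_mono (hle I hI)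
  have hbot : lowerCentralSeries K L L (n - 1) = ⊥ := by
    have h0 : finrank K (lowerCentralSeries K L L (n - 1)) = 0 := by
      simpa using hfiliform n (by omega) le_rfl
    exact LieSubmodule.toSubmodule_injective (Submodule.finrank_eq_zero.mp h0)
  have h2k : 2 * k ≤ n := by
    by_contra h
    refine hnab (k - 2) (by omega) (isLieAbelian_lowerCentralSeries_of_finrank_le ?_ ?_)
    · rw [hC (k - 2) (by omega) (by omega), hC (k - 2 + 1) (by omega) (by omega)]; omega
    · exact eq_bot_iff.mpr ((antitone_lowerCentralSeries K L L (by omega)).trans hbot.le)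
  refine ⟨hbeta, hCk, fun I hI hrank => ?_, by omega, by omega⟩
  exact LieSubmodule.toSubmodule_injective
    (Submodule.eq_of_le_of_finrank_eq (hle I hI) (hrank.trans hCk.symm))

/-- For a k-abelian filiform nilpotent Lie algebra of dimension n ≥ k+3 ≥ 6,
β(g) = n - k = dim C^k(g), C^k(g) is the unique abelian ideal of maximal dimension,
and ⌈n/2⌉ ≤ β(g) ≤ n - 3.  Here C^i(g) (for i ≥ 1, with C^1(g) = g) is the term
`LieModule.lowerCentralSeries K L L (i-1)` of the lower central series. -/
theorem stmt_17 (K L : Type*) [Field K] [CharZero K] [LieRing L] [LieAlgebra K L]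
    [FiniteDimensional K L] [LieRing.IsNilpotent L] (n k : ℕ)
    (hk : 3 ≤ k) (hn : k + 3 ≤ n) (hdim : finrank K L = n)
    (hfiliform : ∀ i : ℕ, 2 ≤ i → i ≤ n →
      finrank K (LieModule.lowerCentralSeries K L L (i - 1)) = n - i)
    (hkab : IsLieAbelian (LieModule.lowerCentralSeries K L L (k - 1)))
    (hkmin : ∀ j : ℕ, 1 ≤ j → j < k →
      ¬ IsLieAbelian (LieModule.lowerCentralSeries K L L (j - 1))) :
    betaInv K L = n - k ∧
      finrank K (LieModule.lowerCentralSeries K L L (k - 1)) = n - k ∧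
      (∀ I : LieIdeal K L, IsLieAbelian I → finrank K I = n - k →
        I = LieModule.lowerCentralSeries K L L (k - 1)) ∧
      (n + 1) / 2 ≤ betaInv K L ∧ betaInv K L ≤ n - 3 :=
  stmt_17_general K L n k hk hn hdim hfiliform hkab hkmin
end

section
/- Let f_n be the standard graded filiform Lie algebra of dimension n ≥ 4, with basis e_1,…,e_n and brackets [e_1,e_i] = e_{i+1} for 2 ≤ i ≤ n−1. Then the span of e_1 and e_n is a maximal abelian subalgebra (with respect to inclusion) of dimension 2, which is not of maximal dimension since α(f_n) = n−1. -/
/-!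
The centralizer of `e₁` is `span {e₁, eₙ}`, because `ad e₁` maps the remaining basis vectors
`e₂, …, eₙ₋₁` injectively onto basis vectors. Since `span {e₁, eₙ}` is itself abelian, any
abelian subalgebra containing it lies in that centralizer, which gives maximality. On the other
hand `e₂, …, eₙ` span an abelian subalgebra of codimension one, while `f_n` is not abelian, so
no abelian subalgebra has dimension `n`.
-/

open Module

open Submodule LieSubalgebra

theorem coe_finRotate_of_add_one_lt {n : ℕ} {i : Fin n} (h : (i : ℕ) + 1 < n) :
    (finRotate n i : ℕ) = i + 1 := by
  obtain _ | m := n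
  · exact i.elim0
  · exact coe_finRotate_of_ne_last fun hi => by simp [hi] at h

namespace Module.Basis

variable {ι R M N : Type*} [Ring R] [AddCommGroup M] [Module R M] [AddCommGroup N] [Module R N]

theorem finrank_span_image_finset [Nontrivial R] [StrongRankCondition R] (b : Basis ι R M)
    (t : Finset ι) : finrank R (span R (b '' t)) = t.card := by
  rw [Set.image_eq_range]
  exact (finrank_span_eq_card (b.linearIndependent.comp _ Subtype.val_injective)).trans
    (Fintype.card_coe t)

theorem ker_le_span_image_compl (b : Basis ι R M) (φ : M →ₗ[R] N) {s : Set ι}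
    (hs : LinearIndepOn R (φ ∘ b) s) (hφ : ∀ i ∉ s, φ (b i) = 0) :
    LinearMap.ker φ ≤ span R (b '' sᶜ) := by
  classical
  intro x hx
  set c := b.repr x
  have hout : Finsupp.linearCombination R (φ ∘ b) (c.filter (· ∉ s)) = 0 := by
    rw [Finsupp.linearCombination_apply]
    refine Finset.sum_eq_zero fun i hi => ?_
    rw [Finsupp.support_filter, Finset.mem_filter] at hi
    simp [hφ i hi.2]
  have hin : c.filter (· ∈ s) = 0 := by
    refine linearIndepOn_iff.mp hs _
      ((Finsupp.mem_supported' _ _).2 fun i hi => Finsupp.filter_apply_neg _ _ hi) ?_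
    calc Finsupp.linearCombination R (φ ∘ b) (c.filter (· ∈ s))
        = Finsupp.linearCombination R (φ ∘ b) (c.filter (· ∈ s) + c.filter (· ∉ s)) := by
          rw [map_add, hout, add_zero]
      _ = φ x := by
          rw [Finsupp.filter_add_filter_not, ← Finsupp.apply_linearCombination,
            b.linearCombination_repr]
      _ = 0 := hx
  rw [b.mem_span_image]
  intro i hi his
  exact Finsupp.mem_support_iff.mp hi (by simpa [his] using congr($hin i))

end Module.Basis

section LieAlgebra

variable {R K L : Type*} [CommRing R] [Field K] [LieRing L] [LieAlgebra R L] [LieAlgebra K L]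

theorem lie_eq_zero_of_mem_pair {x y : L} (h : ⁅x, y⁆ = 0) :
    ∀ z ∈ ({x, y} : Set L), ∀ w ∈ ({x, y} : Set L), ⁅z, w⁆ = 0 := by
  rintro z (rfl | rfl) w (rfl | rfl)
  · exact lie_self _
  · exact h
  · rw [← lie_skew, h, neg_zero]
  · exact lie_self _

namespace LieSubalgebra

theorem lie_eq_zero_of_isLieAbelian_s19 {a : LieSubalgebra R L} (ha : IsLieAbelian a) {x y : L}
    (hx : x ∈ a) (hy : y ∈ a) : ⁅x, y⁆ = 0 :=
  congr_arg Subtype.val (ha.trivial ⟨x, hx⟩ ⟨y, hy⟩)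

theorem eq_of_isLieAbelian_of_ker_ad_le {a a' : LieSubalgebra R L} {x : L} (hx : x ∈ a)
    (hker : LinearMap.ker (LieAlgebra.ad R L x) ≤ a.toSubmodule) (ha' : IsLieAbelian a')
    (hle : a ≤ a') : a' = a :=
  le_antisymm (fun _ hy => hker (lie_eq_zero_of_isLieAbelian_s19 ha' (hle hx) hy)) hle

theorem finrank_lt_of_isLieAbelian [FiniteDimensional K L] (hL : ¬IsLieAbelian L)
    {a : LieSubalgebra K L} (ha : IsLieAbelian a) : finrank K a < finrank K L := by
  refine (Submodule.finrank_le a.toSubmodule).lt_of_ne fun h => hL ⟨fun x y => ?_⟩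
  have htop := Submodule.eq_top_of_finrank_eq h
  exact lie_eq_zero_of_isLieAbelian_s19 ha (htop ▸ mem_top (x := x) : x ∈ a.toSubmodule)
    (htop ▸ mem_top (x := y) : y ∈ a.toSubmodule)

theorem finrank_lieSpan_of_forall_lie_eq_zero {s : Set L}
    (hs : ∀ x ∈ s, ∀ y ∈ s, ⁅x, y⁆ = 0) : finrank K (lieSpan K L s) = finrank K (span K s) := by
  rw [← coe_lieSpan_eq_span_of_forall_lie_eq_zero hs]
  rfl

end LieSubalgebra

theorem alphaInv_eq_finrank_sub_one [FiniteDimensional K L] (hL : ¬IsLieAbelian L)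
    {a : LieSubalgebra K L} (ha : IsLieAbelian a) (hfa : finrank K a = finrank K L - 1) :
    alphaInv K L = finrank K L - 1 :=
  IsGreatest.csSup_eq ⟨⟨a, ha, hfa⟩, by
    rintro _ ⟨a', ha', rfl⟩
    have := finrank_lt_of_isLieAbelian hL ha'
    omega⟩

variable {n : ℕ} (b : Basis (Fin n) K L)

theorem Module.Basis.ker_ad_le_span_first_last (hn : 1 < n)
    (hbr : ∀ i : ℕ, 1 ≤ i → ∀ hi : i + 1 < n,
      ⁅b ⟨0, Nat.zero_lt_of_lt hn⟩, b ⟨i, Nat.lt_of_succ_lt hi⟩⁆ = b ⟨i + 1, hi⟩)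
    (h1n : ⁅b ⟨0, Nat.zero_lt_of_lt hn⟩, b ⟨n - 1, Nat.sub_one_lt_of_lt hn⟩⁆ = 0) :
    LinearMap.ker (LieAlgebra.ad K L (b ⟨0, Nat.zero_lt_of_lt hn⟩)) ≤
      span K {b ⟨0, Nat.zero_lt_of_lt hn⟩, b ⟨n - 1, Nat.sub_one_lt_of_lt hn⟩} := by
  set s : Set (Fin n) := {⟨0, Nat.zero_lt_of_lt hn⟩, ⟨n - 1, Nat.sub_one_lt_of_lt hn⟩}ᶜ
  have hrot : ∀ i ∈ s,
      b (finRotate n i) = LieAlgebra.ad K L (b ⟨0, Nat.zero_lt_of_lt hn⟩) (b i) := by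
    intro i hi
    simp only [s, Set.mem_compl_iff, Set.mem_insert_iff, Set.mem_singleton_iff, Fin.ext_iff] at hi
    have hi' : (i : ℕ) + 1 < n := by omega
    rw [LieAlgebra.ad_apply, show finRotate n i = ⟨i + 1, hi'⟩ from
      Fin.ext (coe_finRotate_of_add_one_lt hi')]
    exact (hbr i (by omega) hi').symm
  have hker := b.ker_le_span_image_compl _
    (((b.linearIndependent.comp _ (finRotate n).injective).linearIndepOn s).congr hrot) <| by
      intro i hi
      rw [Set.notMem_compl_iff] at hi
      rcases hi with rfl | rfl
      · exact lie_self _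
      · exact h1n
  rwa [compl_compl, Set.image_pair] at hker

theorem Module.Basis.not_isLieAbelian (hn : 2 < n)
    (hbr : ∀ i : ℕ, 1 ≤ i → ∀ hi : i + 1 < n,
      ⁅b ⟨0, Nat.zero_lt_of_lt hn⟩, b ⟨i, Nat.lt_of_succ_lt hi⟩⁆ = b ⟨i + 1, hi⟩) :
    ¬IsLieAbelian L := fun h =>
  b.ne_zero ⟨2, by omega⟩ ((hbr 1 le_rfl (by omega)).symm.trans (h.trivial _ _))

theorem Module.Basis.lie_eq_zero_of_mem_image_compl_first (hn : 0 < n)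
    (hzero : ∀ i j : ℕ, 1 ≤ i → 1 ≤ j → ∀ hi : i < n, ∀ hj : j < n,
      ⁅b ⟨i, hi⟩, b ⟨j, hj⟩⁆ = 0) :
    ∀ x ∈ b '' ↑({⟨0, Nat.zero_lt_of_lt hn⟩}ᶜ : Finset (Fin n)),
      ∀ y ∈ b '' ↑({⟨0, Nat.zero_lt_of_lt hn⟩}ᶜ : Finset (Fin n)), ⁅x, y⁆ = 0 := by
  rintro _ ⟨i, hi, rfl⟩ _ ⟨j, hj, rfl⟩
  simp only [Finset.coe_compl, Finset.coe_singleton, Set.mem_compl_iff, Set.mem_singleton_iff,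
    Fin.ext_iff] at hi hj
  exact hzero i j (by omega) (by omega) i.isLt j.isLt

end LieAlgebra

/-- In the standard graded filiform Lie algebra f_n (n ≥ 4), the span of e_1 and e_n is a
maximal abelian subalgebra (with respect to inclusion) of dimension 2, which is not of
maximal dimension, since α(f_n) = n - 1. -/
theorem stmt_19 (K L : Type*) [Field K] [LieRing L] [LieAlgebra K L]
    (n : ℕ) (hn : 4 ≤ n) (b : Basis (Fin n) K L)
    (hbr : ∀ i : ℕ, 1 ≤ i → ∀ hi : i + 1 < n,
      ⁅b ⟨0, by omega⟩, b ⟨i, by omega⟩⁆ = b ⟨i + 1, hi⟩)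
    (hzero : ∀ i j : ℕ, 1 ≤ i → 1 ≤ j → ∀ hi : i < n, ∀ hj : j < n,
      ⁅b ⟨i, hi⟩, b ⟨j, hj⟩⁆ = 0)
    (h1n : ⁅b ⟨0, by omega⟩, b ⟨n - 1, by omega⟩⁆ = 0) :
    (∃ a : LieSubalgebra K L,
      (a : Submodule K L) = Submodule.span K {b ⟨0, by omega⟩, b ⟨n - 1, by omega⟩} ∧
      IsLieAbelian a ∧ finrank K a = 2 ∧
      (∀ a' : LieSubalgebra K L, IsLieAbelian a' → a ≤ a' → a' = a)) ∧
      alphaInv K L = n - 1 := by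
  have : FiniteDimensional K L := .of_basis b
  have hdim : finrank K L = n := by rw [finrank_eq_card_basis b, Fintype.card_fin]
  have hpair := lie_eq_zero_of_mem_pair h1n
  have hcoe := coe_lieSpan_eq_span_of_forall_lie_eq_zero (R := K) hpair
  have hends : (⟨0, by omega⟩ : Fin n) ≠ ⟨n - 1, by omega⟩ := by simp [Fin.ext_iff]; omega
  refine ⟨⟨lieSpan K L _, hcoe, isLieAbelian_lieSpan_iff.mpr hpair, ?_, fun a' ha' hle => ?_⟩, ?_⟩
  · rw [finrank_lieSpan_of_forall_lie_eq_zero hpair, ← Set.image_pair, ← Finset.coe_pair,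
      b.finrank_span_image_finset, Finset.card_pair hends]
  · exact eq_of_isLieAbelian_of_ker_ad_le (subset_lieSpan (Set.mem_insert _ _))
      (hcoe ▸ b.ker_ad_le_span_first_last (by omega) hbr h1n) ha' hle
  · have hW := b.lie_eq_zero_of_mem_image_compl_first (by omega) hzero
    rw [← hdim]
    refine alphaInv_eq_finrank_sub_one (b.not_isLieAbelian (by omega) hbr)
      (isLieAbelian_lieSpan_iff.mpr hW) ?_
    rw [finrank_lieSpan_of_forall_lie_eq_zero hW, b.finrank_span_image_finset, Finset.card_compl,
      Finset.card_singleton, Fintype.card_fin, hdim]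
end
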